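/- Let (p_n) and (q_n) be sequences of odd prime numbers with p_n ≠ q_n for all n and p_n/q_n → 1 as n → ∞, and set c_n = −(p_n⁴ + 2p_n³q_n + 2p_n²q_n² − 2p_nq_n³ + q_n⁴)/(2 p_n q_n)². Then for all sufficiently large n, the map f_{c_n}(z) = z² + c_n has exactly 6 rational preperiodic points (namely ±(p_n² + q_n²)/(2p_nq_n) and ±1/2 ± (p_n² + p_nq_n − q_n²)/(2p_nq_n)), of which exactly 2 are periodic and these two form a cycle of exact length 2. -/

import Mathlib

open Filter

/-- The quadratic map `f_c(z) = z² + c`. -/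
def fc (c : ℚ) : ℚ → ℚ := fun z => z ^ 2 + c

/-- `x` is preperiodic for `f_c`: its forward orbit is eventually periodic. -/
def IsPreper (c x : ℚ) : Prop := ∃ m n : ℕ, m < n ∧ (fc c)^[m] x = (fc c)^[n] x

/-- `x` is periodic for `f_c`. -/
def IsPer (c x : ℚ) : Prop := ∃ n : ℕ, 1 ≤ n ∧ (fc c)^[n] x = x

/-!
Write `t = (p² - q²)/(2pq)` and `s = (p² + q²)/(2pq)`. Then `c = -(t² + t + 1)` and
`s² = 1 + t²`, so `t ↦ -t - 1 ↦ t` is a 2-cycle, `-t` and `t + 1` map into it, and `±s ↦ -t`: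
these six points are preperiodic.

Conversely, `c·(2pq)²` is an integer, so an `r`-adic escape argument at every prime `r` shows
that every preperiodic point is `u/(2pq)` with `u ∈ ℤ`. Applied also to its image, this gives `u² ≡ q⁴ (mod p)`,
`u² ≡ p⁴ (mod q)` and `u` even, so by the Chinese remainder theorem `x` differs from one of
`±s, ±t` by an integer. When `p/q` is close to `1` we have `|t| < 1/4`, and the archimedean escape
bound `|x|² - |x| ≤ |c|` gives `|x| < 7/4`, leaving twelve candidates. The six spurious ones,
`±(s - 1)`, `±(s - 2)` and `±(t - 1)`, have an image whose numerator is `≡ ±3g²` modulo one of the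
primes `r ∈ {p, q}` (with `g` the other one), so the congruence for the image would force
`r ∣ 8g⁴`.
-/

theorem injective_iterate_of_escape {α β : Type*} [Preorder β] {f : α → α} {x : α}
    (φ : α → β) (h : ∀ y, φ x ≤ φ y → φ y < φ (f y)) :
    Function.Injective fun n => f^[n] x := by
  have hge : ∀ n, φ x ≤ φ (f^[n] x) := by
    intro n
    induction n with
    | zero => exact le_rfl
    | succ n ih => rw [Function.iterate_succ_apply']; exact ih.trans (h _ ih).le
  have hmono : StrictMono fun n => φ (f^[n] x) := strictMono_nat_of_lt_succ fun n => by
    simpa only [Function.iterate_succ_apply'] using h _ (hge n)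
  exact hmono.injective.of_comp

theorem Rat.exists_eq_intCast_of_forall_padicValRat_nonneg {y : ℚ}
    (h : ∀ r : ℕ, r.Prime → 0 ≤ padicValRat r y) : ∃ u : ℤ, y = u := by
  refine ⟨y.num, (Rat.coe_int_num_of_den_eq_one ?_).symm⟩
  by_contra hden
  set r := y.den.minFac
  have hr : r.Prime := Nat.minFac_prime hden
  have hrden : r ∣ y.den := Nat.minFac_dvd _
  have hrnum : ¬ (r : ℤ) ∣ y.num := fun hnum =>
    hr.ne_one (Nat.eq_one_of_dvd_one (y.reduced ▸ Nat.dvd_gcd (Int.natCast_dvd.mp hnum) hrden))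
  have : Fact r.Prime := ⟨hr⟩
  have hval_den := one_le_padicValNat_of_dvd y.den_ne_zero hrden
  have hy := h r hr
  rw [padicValRat_def, padicValInt.eq_zero_of_not_dvd hrnum] at hy
  omega

theorem two_mul_mul_dvd_sub {p q : ℕ} (hpq : Nat.Coprime p q) (hp : Odd p) (hq : Odd q)
    {u w : ℤ} (hu : Even u) (hw : Even w) (hpu : (p : ℤ) ∣ u - w) (hqu : (q : ℤ) ∣ u - w) :
    (2 * p * q : ℤ) ∣ u - w := by
  have h2p : IsCoprime (2 : ℤ) p := Nat.isCoprime_iff_coprime.mpr (Nat.coprime_two_left.mpr hp)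
  have h2pq : IsCoprime (2 * p : ℤ) q := by
    exact_mod_cast Nat.isCoprime_iff_coprime.mpr ((Nat.coprime_two_left.mpr hq).mul_left hpq)
  exact h2pq.mul_dvd (h2p.mul_dvd (even_iff_two_dvd.mp (hu.sub hw)) hpu) hqu

theorem exists_sign_dvd_sub_of_dvd_sq_sub {r : ℕ} (hr : r.Prime) {u a : ℤ}
    (h : (r : ℤ) ∣ u ^ 2 - a ^ 2) : ∃ ε : ℤ, (ε = 1 ∨ ε = -1) ∧ (r : ℤ) ∣ u - ε * a := by
  rw [sq_sub_sq] at h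
  rcases (Nat.prime_iff_prime_int.mp hr).dvd_or_dvd h with h | h
  · exact ⟨-1, .inr rfl, by simpa using h⟩
  · exact ⟨1, .inl rfl, by simpa using h⟩

theorem not_dvd_sq_sub_pow_four {r g : ℕ} (hr : r.Prime) (hr2 : Odd r) (hg : g.Prime)
    (hrg : r ≠ g) {u : ℤ} (hu : (r : ℤ) ∣ u ^ 2 - 9 * g ^ 4) : ¬ (r : ℤ) ∣ u ^ 2 - g ^ 4 := by
  intro h
  have hrz := Nat.prime_iff_prime_int.mp hr
  have h8 : (r : ℤ) ∣ 2 ^ 3 * (g : ℤ) ^ 4 := by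
    have := dvd_sub h hu
    rwa [show u ^ 2 - (g : ℤ) ^ 4 - (u ^ 2 - 9 * g ^ 4) = 2 ^ 3 * g ^ 4 by ring] at this
  rcases hrz.dvd_or_dvd h8 with h2 | hg4
  · have : r ∣ 2 := by exact_mod_cast hrz.dvd_of_dvd_pow h2
    exact hr2.ne_two_of_dvd_nat dvd_rfl ((Nat.prime_dvd_prime_iff_eq hr Nat.prime_two).mp this)
  · have : r ∣ g := by exact_mod_cast hrz.dvd_of_dvd_pow hg4
    exact hrg ((Nat.prime_dvd_prime_iff_eq hr hg).mp this)

section Preperiodic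

variable {c x : ℚ}

theorem not_isPreper_of_injective (h : Function.Injective fun n => (fc c)^[n] x) :
    ¬ IsPreper c x := fun ⟨_, _, hmn, he⟩ => hmn.ne (h he)

theorem isPreper_fc_iff : IsPreper c (fc c x) ↔ IsPreper c x := by
  constructor
  · rintro ⟨m, n, hmn, he⟩
    exact ⟨m + 1, n + 1, by omega, by simpa only [Function.iterate_succ_apply] using he⟩
  · rintro ⟨m, n, hmn, he⟩
    exact ⟨m, n, hmn, by
      rw [← Function.iterate_succ_apply, ← Function.iterate_succ_apply,
        Function.iterate_succ_apply', Function.iterate_succ_apply', he]⟩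

theorem isPreper_neg_iff : IsPreper c (-x) ↔ IsPreper c x := by
  have hf : fc c (-x) = fc c x := by simp only [fc, neg_sq]
  rw [← isPreper_fc_iff, hf, isPreper_fc_iff]

theorem IsPer.isPreper (hx : IsPer c x) : IsPreper c x :=
  let ⟨n, hn, h⟩ := hx; ⟨0, n, hn, h.symm⟩

theorem IsPer.mem_of_iterate_mem {A : Set ℚ} (hA : Set.MapsTo (fc c) A A) (hx : IsPer c x)
    {m : ℕ} (hm : (fc c)^[m] x ∈ A) : x ∈ A := by
  obtain ⟨n, hn, hper⟩ := hx
  have hnm : (fc c)^[n * m] x = x := Function.IsPeriodicPt.mul_const hper m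
  rw [← hnm, ← Nat.sub_add_cancel (Nat.le_mul_of_pos_left m hn), Function.iterate_add_apply]
  exact hA.iterate _ hm

theorem sq_abs_sub_abs_le_of_isPreper (hx : IsPreper c x) : |x| ^ 2 - |x| ≤ |c| := by
  by_contra! h
  have hx1 : 1 < |x| := by nlinarith [abs_nonneg c, abs_nonneg x]
  refine not_isPreper_of_injective (injective_iterate_of_escape (fun y => |y|) fun y hy => ?_) hx
  show |y| < |y ^ 2 + c|
  nlinarith [neg_abs_le c, le_abs_self (y ^ 2 + c), sq_abs y]

theorem padicValRat_le_two_mul_of_isPreper {r : ℕ} [Fact r.Prime] (hx : IsPreper c x)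
    (hneg : padicValRat r x < 0) : padicValRat r c ≤ 2 * padicValRat r x := by
  by_contra! h
  refine not_isPreper_of_injective
    (injective_iterate_of_escape (fun y => -padicValRat r y) fun y hy => ?_) hx
  simp only [neg_le_neg_iff] at hy
  have hy0 : y ≠ 0 := by rintro rfl; simp at hy; omega
  have hsq : padicValRat r (y ^ 2) = 2 * padicValRat r y := by
    rw [padicValRat.pow]; push_cast; ring
  have hval : padicValRat r (y ^ 2 + c) = padicValRat r (y ^ 2) := by
    rcases eq_or_ne c 0 with rfl | hc
    · rw [add_zero]
    · have hlt : padicValRat r (y ^ 2) < padicValRat r c := by omega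
      refine padicValRat.add_eq_of_lt (fun h0 => ?_) (pow_ne_zero 2 hy0) hc hlt
      rw [eq_neg_of_add_eq_zero_right h0, padicValRat.neg] at hlt
      exact hlt.false
  show -padicValRat r y < -padicValRat r (y ^ 2 + c)
  omega

theorem exists_mul_eq_intCast_of_isPreper {d : ℤ} (hd : d ≠ 0) (hc : ∃ n : ℤ, c * d ^ 2 = n)
    (hx : IsPreper c x) : ∃ u : ℤ, x * d = u := by
  refine Rat.exists_eq_intCast_of_forall_padicValRat_nonneg fun r hr => ?_
  have : Fact r.Prime := ⟨hr⟩
  rcases eq_or_ne x 0 with rfl | hx0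
  · simp
  have hd' : (d : ℚ) ≠ 0 := Int.cast_ne_zero.mpr hd
  have hvd : 0 ≤ padicValRat r d := by simp [padicValRat.of_int]
  have hvc : 0 ≤ padicValRat r c + 2 * padicValRat r d := by
    rcases eq_or_ne c 0 with rfl | hc0
    · simp
    obtain ⟨n, hn⟩ := hc
    have := padicValRat.mul hc0 (pow_ne_zero 2 hd') (p := r)
    rw [hn, padicValRat.pow, padicValRat.of_int] at this
    push_cast at this
    omega
  rw [padicValRat.mul hx0 hd']
  by_contra! hneg
  have := padicValRat_le_two_mul_of_isPreper hx (by omega : padicValRat r x < 0)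
  omega

end Preperiodic

def twoCycleC (t : ℚ) : ℚ := -(t ^ 2 + t + 1)

section TwoCycleFamily

variable {s t x : ℚ}

theorem fc_twoCycleC_self : fc (twoCycleC t) t = -t - 1 := by
  simp only [fc, twoCycleC]; ring

theorem fc_twoCycleC_neg_sub_one : fc (twoCycleC t) (-t - 1) = t := by
  simp only [fc, twoCycleC]; ring

theorem fc_twoCycleC_neg : fc (twoCycleC t) (-t) = -t - 1 := by
  simp only [fc, twoCycleC]; ring

theorem fc_twoCycleC_add_one : fc (twoCycleC t) (t + 1) = t := by
  simp only [fc, twoCycleC]; ring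

theorem fc_twoCycleC_of_sq_eq (hs : s ^ 2 = 1 + t ^ 2) : fc (twoCycleC t) s = -t := by
  simp only [fc, twoCycleC, hs]; ring

theorem isPer_twoCycleC_self : IsPer (twoCycleC t) t :=
  ⟨2, by norm_num, by
    rw [Function.iterate_succ_apply', Function.iterate_one, fc_twoCycleC_self,
      fc_twoCycleC_neg_sub_one]⟩

theorem isPer_twoCycleC_neg_sub_one : IsPer (twoCycleC t) (-t - 1) :=
  ⟨2, by norm_num, by
    rw [Function.iterate_succ_apply', Function.iterate_one, fc_twoCycleC_neg_sub_one,
      fc_twoCycleC_self]⟩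

theorem isPreper_twoCycleC_of_mem (hs : s ^ 2 = 1 + t ^ 2)
    (hx : x ∈ ({s, -s, t + 1, -t, t, -t - 1} : Set ℚ)) : IsPreper (twoCycleC t) x := by
  have hneg : IsPreper (twoCycleC t) (-t) :=
    isPreper_fc_iff.mp (fc_twoCycleC_neg ▸ isPer_twoCycleC_neg_sub_one.isPreper)
  have hs' : IsPreper (twoCycleC t) s :=
    isPreper_fc_iff.mp ((fc_twoCycleC_of_sq_eq hs).symm ▸ hneg)
  rcases hx with rfl | rfl | rfl | rfl | rfl | rfl
  · exact hs'
  · exact isPreper_neg_iff.mpr hs'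
  · exact isPreper_fc_iff.mp (fc_twoCycleC_add_one ▸ isPer_twoCycleC_self.isPreper)
  · exact hneg
  · exact isPer_twoCycleC_self.isPreper
  · exact isPer_twoCycleC_neg_sub_one.isPreper

theorem setOf_isPer_twoCycleC (hs : s ^ 2 = 1 + t ^ 2)
    (hpre : {x | IsPreper (twoCycleC t) x} ⊆ {s, -s, t + 1, -t, t, -t - 1}) :
    {x | IsPer (twoCycleC t) x} = {t, -t - 1} := by
  have hcycle : Set.MapsTo (fc (twoCycleC t)) {t, -t - 1} {t, -t - 1} := by
    rintro x (rfl | rfl)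
    · simp [fc_twoCycleC_self]
    · simp [fc_twoCycleC_neg_sub_one]
  refine Set.Subset.antisymm (fun x hx => hx.mem_of_iterate_mem hcycle (m := 2) ?_) ?_
  · rcases hpre hx.isPreper with rfl | rfl | rfl | rfl | rfl | rfl <;>
      simp [fc_twoCycleC_of_sq_eq, hs, fc_twoCycleC_self, fc_twoCycleC_neg_sub_one,
        fc_twoCycleC_neg, fc_twoCycleC_add_one]
  · rintro x (rfl | rfl)
    exacts [isPer_twoCycleC_self, isPer_twoCycleC_neg_sub_one]

theorem abs_lt_of_isPreper_twoCycleC (ht : |t| < 1 / 4) (hx : IsPreper (twoCycleC t) x) :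
    |x| < 7 / 4 := by
  have hbound := sq_abs_sub_abs_le_of_isPreper hx
  have hc : |twoCycleC t| < 21 / 16 := by
    rw [twoCycleC, abs_neg, abs_of_pos (by nlinarith)]
    nlinarith [abs_lt.mp ht]
  nlinarith [abs_nonneg x]

theorem ncard_twoCycleC_points (hs : s ^ 2 = 1 + t ^ 2) (hs0 : 0 < s) (ht0 : t ≠ 0)
    (ht : |t| < 1 / 4) : ({s, -s, t + 1, -t, t, -t - 1} : Set ℚ).ncard = 6 := by
  obtain ⟨ht1, ht2⟩ := abs_lt.mp ht
  have hs1 : 1 ≤ s := by nlinarith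
  have hst : s ≠ t + 1 := fun h => ht0 (by nlinarith)
  rw [Set.ncard_eq_toFinset_card']
  simp only [Set.toFinset_insert, Set.toFinset_singleton]
  repeat rw [Finset.card_insert_of_notMem]
  all_goals simp only [Finset.card_singleton, Finset.mem_insert, Finset.mem_singleton, not_or]
  all_goals repeat' apply And.intro
  all_goals intro h; first | linarith | exact hst (by linarith) | exact ht0 (by linarith)

end TwoCycleFamily

def tParam (p q : ℕ) : ℚ := ((p : ℚ) ^ 2 - q ^ 2) / (2 * p * q)

def sParam (p q : ℕ) : ℚ := ((p : ℚ) ^ 2 + q ^ 2) / (2 * p * q)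

section OddPrimes

variable {p q : ℕ}

theorem sParam_sq (hp : p ≠ 0) (hq : q ≠ 0) : sParam p q ^ 2 = 1 + tParam p q ^ 2 := by
  simp only [sParam, tParam]; field_simp; ring

theorem one_le_sParam (hp : p ≠ 0) (hq : q ≠ 0) : 1 ≤ sParam p q := by
  rw [sParam, le_div_iff₀ (by positivity)]
  nlinarith [sq_nonneg ((p : ℚ) - q)]

theorem tParam_ne_zero (hp : p ≠ 0) (hq : q ≠ 0) (hpq : p ≠ q) : tParam p q ≠ 0 := by
  rw [tParam, div_ne_zero_iff, sub_ne_zero]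
  exact ⟨by exact_mod_cast (Nat.pow_left_injective two_ne_zero).ne hpq, by positivity⟩

theorem exists_eq_intCast_div_of_isPreper (hp : p ≠ 0) (hq : q ≠ 0) {x : ℚ}
    (hx : IsPreper (twoCycleC (tParam p q)) x) : ∃ u : ℤ, x = u / (2 * p * q) := by
  have hd : (2 * p * q : ℤ) ≠ 0 := by positivity
  obtain ⟨u, hu⟩ := exists_mul_eq_intCast_of_isPreper hd
    ⟨-(p ^ 4 + 2 * p ^ 3 * q + 2 * p ^ 2 * q ^ 2 - 2 * p * q ^ 3 + q ^ 4), by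
      simp only [twoCycleC, tParam]; push_cast; field_simp; ring⟩ hx
  exact ⟨u, by rw [← hu]; push_cast; field_simp⟩

theorem even_and_dvd_sq_sub_of_isPreper (hp : Odd p) (hq : Odd q) {u : ℤ}
    (hx : IsPreper (twoCycleC (tParam p q)) (u / (2 * p * q))) :
    Even u ∧ (p : ℤ) ∣ u ^ 2 - q ^ 4 ∧ (q : ℤ) ∣ u ^ 2 - p ^ 4 := by
  have hp0 : (p : ℚ) ≠ 0 := by exact_mod_cast hp.pos.ne'
  have hq0 : (q : ℚ) ≠ 0 := by exact_mod_cast hq.pos.ne'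
  obtain ⟨w, hw⟩ := exists_eq_intCast_div_of_isPreper hp.pos.ne' hq.pos.ne'
    (isPreper_fc_iff.mpr hx)
  set P : ℤ := (p : ℤ)
  set Q : ℤ := (q : ℤ)
  have key : u ^ 2 = P ^ 4 + 2 * P ^ 3 * Q + 2 * P ^ 2 * Q ^ 2 - 2 * P * Q ^ 3 + Q ^ 4
      + 2 * P * Q * w := by
    simp only [fc, twoCycleC, tParam] at hw
    field_simp at hw
    have : ((u ^ 2 : ℤ) : ℚ) = ((P ^ 4 + 2 * P ^ 3 * Q + 2 * P ^ 2 * Q ^ 2 - 2 * P * Q ^ 3 + Q ^ 4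
      + 2 * P * Q * w : ℤ) : ℚ) := by push_cast [P, Q]; linear_combination hw
    exact_mod_cast this
  refine ⟨?_, ⟨P ^ 3 + 2 * P ^ 2 * Q + 2 * P * Q ^ 2 - 2 * Q ^ 3 + 2 * Q * w, by rw [key]; ring⟩,
    ⟨2 * P ^ 3 + 2 * P ^ 2 * Q - 2 * P * Q ^ 2 + Q ^ 3 + 2 * P * w, by rw [key]; ring⟩⟩
  have hsplit : u ^ 2 = P ^ 4 + Q ^ 4 + 2 * (P ^ 3 * Q + P ^ 2 * Q ^ 2 - P * Q ^ 3 + P * Q * w) := by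
    rw [key]; ring
  have hodd : Even (P ^ 4 + Q ^ 4) := hp.natCast.pow.add_odd hq.natCast.pow
  exact (Int.even_pow' two_ne_zero).mp (hsplit ▸ hodd.add (even_two_mul _))

theorem exists_add_intCast_of_isPreper (hp : p.Prime) (hq : q.Prime) (hp2 : Odd p)
    (hq2 : Odd q) (hpq : p ≠ q) {x : ℚ} (hx : IsPreper (twoCycleC (tParam p q)) x) :
    ∃ x₀ ∈ ({sParam p q, -sParam p q, tParam p q, -tParam p q} : Set ℚ), ∃ k : ℤ, x = x₀ + k := by
  obtain ⟨u, rfl⟩ := exists_eq_intCast_div_of_isPreper hp.ne_zero hq.ne_zero hx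
  obtain ⟨hu, hpu, hqu⟩ := even_and_dvd_sq_sub_of_isPreper hp2 hq2 hx
  obtain ⟨ε, hε, hpε⟩ := exists_sign_dvd_sub_of_dvd_sq_sub hp (a := (q : ℤ) ^ 2)
    (by convert hpu using 2; ring)
  obtain ⟨δ, hδ, hqδ⟩ := exists_sign_dvd_sub_of_dvd_sq_sub hq (a := (p : ℤ) ^ 2)
    (by convert hqu using 2; ring)
  set w : ℤ := δ * p ^ 2 + ε * q ^ 2 with hw_def
  have hw : Even w := by
    have hodd : ∀ σ : ℤ, (σ = 1 ∨ σ = -1) → Odd σ := by rintro _ (rfl | rfl) <;> decide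
    exact ((hodd δ hδ).mul hp2.natCast.pow).add_odd ((hodd ε hε).mul hq2.natCast.pow)
  have hpw : (p : ℤ) ∣ u - w := by
    have := dvd_sub hpε (dvd_mul_right (p : ℤ) (δ * p))
    rwa [show u - ε * q ^ 2 - p * (δ * p) = u - w by rw [hw_def]; ring] at this
  have hqw : (q : ℤ) ∣ u - w := by
    have := dvd_sub hqδ (dvd_mul_right (q : ℤ) (ε * q))
    rwa [show u - δ * p ^ 2 - q * (ε * q) = u - w by rw [hw_def]; ring] at this
  obtain ⟨k, hk⟩ :=
    two_mul_mul_dvd_sub ((Nat.coprime_primes hp hq).mpr hpq) hp2 hq2 hu hw hpw hqw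
  have hp0 : (p : ℚ) ≠ 0 := by exact_mod_cast hp.ne_zero
  have hq0 : (q : ℚ) ≠ 0 := by exact_mod_cast hq.ne_zero
  refine ⟨(w : ℚ) / (2 * p * q), ?_, k, ?_⟩
  · simp only [Set.mem_insert_iff, Set.mem_singleton_iff, sParam, tParam, hw_def]
    rcases hε with rfl | rfl <;> rcases hδ with rfl | rfl <;> push_cast
    · left; ring
    · right; right; right; ring
    · right; right; left; ring
    · right; left; ring
  · have hu : (u : ℚ) = w + 2 * p * q * k := by
      exact_mod_cast (by linear_combination hk : u = w + 2 * p * q * k)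
    rw [hu]
    field_simp

theorem not_isPreper_sParam_sub_one (hp : p.Prime) (hq : q.Prime) (hp2 : Odd p) (hq2 : Odd q)
    (hpq : p ≠ q) : ¬ IsPreper (twoCycleC (tParam p q)) (sParam p q - 1) := by
  have hp0 : (p : ℚ) ≠ 0 := by exact_mod_cast hp.ne_zero
  have hq0 : (q : ℚ) ≠ 0 := by exact_mod_cast hq.ne_zero
  set u : ℤ := -3 * p ^ 2 + 2 * p * q - q ^ 2
  have hf : fc (twoCycleC (tParam p q)) (sParam p q - 1) = u / (2 * p * q) := by
    simp only [fc, twoCycleC, tParam, sParam, u]; push_cast; field_simp; ring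
  exact fun h => not_dvd_sq_sub_pow_four hq hq2 hp hpq.symm
    ⟨(2 * p - q) * (u - 3 * p ^ 2), by ring⟩
    (even_and_dvd_sq_sub_of_isPreper hp2 hq2 (hf ▸ isPreper_fc_iff.mpr h)).2.2

theorem not_isPreper_sParam_sub_two (hp : p.Prime) (hq : q.Prime) (hp2 : Odd p) (hq2 : Odd q)
    (hpq : p ≠ q) : ¬ IsPreper (twoCycleC (tParam p q)) (sParam p q - 2) := by
  have hp0 : (p : ℚ) ≠ 0 := by exact_mod_cast hp.ne_zero
  have hq0 : (q : ℚ) ≠ 0 := by exact_mod_cast hq.ne_zero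
  set u : ℤ := -5 * p ^ 2 + 8 * p * q - 3 * q ^ 2
  have hf : fc (twoCycleC (tParam p q)) (sParam p q - 2) = u / (2 * p * q) := by
    simp only [fc, twoCycleC, tParam, sParam, u]; push_cast; field_simp; ring
  exact fun h => not_dvd_sq_sub_pow_four hp hp2 hq hpq
    ⟨(8 * q - 5 * p) * (u - 3 * q ^ 2), by ring⟩
    (even_and_dvd_sq_sub_of_isPreper hp2 hq2 (hf ▸ isPreper_fc_iff.mpr h)).2.1

theorem not_isPreper_tParam_sub_one (hp : p.Prime) (hq : q.Prime) (hp2 : Odd p) (hq2 : Odd q)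
    (hpq : p ≠ q) : ¬ IsPreper (twoCycleC (tParam p q)) (tParam p q - 1) := by
  have hp0 : (p : ℚ) ≠ 0 := by exact_mod_cast hp.ne_zero
  have hq0 : (q : ℚ) ≠ 0 := by exact_mod_cast hq.ne_zero
  set u : ℤ := -3 * p ^ 2 + 3 * q ^ 2
  have hf : fc (twoCycleC (tParam p q)) (tParam p q - 1) = u / (2 * p * q) := by
    simp only [fc, twoCycleC, tParam, u]; push_cast; field_simp; ring
  exact fun h => not_dvd_sq_sub_pow_four hp hp2 hq hpq ⟨-3 * p * (u + 3 * q ^ 2), by ring⟩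
    (even_and_dvd_sq_sub_of_isPreper hp2 hq2 (hf ▸ isPreper_fc_iff.mpr h)).2.1

theorem eq_of_isPreper_of_eq_add_intCast (hp : p.Prime) (hq : q.Prime) (hp2 : Odd p)
    (hq2 : Odd q) (hpq : p ≠ q) (ht : |tParam p q| < 1 / 4) {y : ℚ}
    (hy : IsPreper (twoCycleC (tParam p q)) y) {k : ℤ}
    (hk : y = sParam p q + k ∨ y = tParam p q + k) :
    y = sParam p q ∨ y = tParam p q + 1 ∨ y = tParam p q := by
  obtain ⟨ht1, ht2⟩ := abs_lt.mp ht
  have hs1 := one_le_sParam hp.ne_zero hq.ne_zero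
  have hs2 : sParam p q < 5 / 4 := by nlinarith [sParam_sq hp.ne_zero hq.ne_zero]
  obtain ⟨hy1, hy2⟩ := abs_lt.mp (abs_lt_of_isPreper_twoCycleC ht hy)
  rcases hk with rfl | rfl
  · have hk1 : -3 < k := by exact_mod_cast (by linarith : (-3 : ℚ) < k)
    have hk2 : k < 1 := by exact_mod_cast (by linarith : (k : ℚ) < 1)
    interval_cases k
    · exact absurd hy (by simpa [sub_eq_add_neg] using
        not_isPreper_sParam_sub_two hp hq hp2 hq2 hpq)
    · exact absurd hy (by simpa [sub_eq_add_neg] using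
        not_isPreper_sParam_sub_one hp hq hp2 hq2 hpq)
    · simp
  · have hk1 : -2 < k := by exact_mod_cast (by linarith : (-2 : ℚ) < k)
    have hk2 : k < 2 := by exact_mod_cast (by linarith : (k : ℚ) < 2)
    interval_cases k
    · exact absurd hy (by simpa [sub_eq_add_neg] using
        not_isPreper_tParam_sub_one hp hq hp2 hq2 hpq)
    · simp
    · simp

theorem setOf_isPreper_twoCycleC_tParam_subset (hp : p.Prime) (hq : q.Prime) (hp2 : Odd p)
    (hq2 : Odd q) (hpq : p ≠ q) (ht : |tParam p q| < 1 / 4) :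
    {x | IsPreper (twoCycleC (tParam p q)) x} ⊆
      {sParam p q, -sParam p q, tParam p q + 1, -tParam p q, tParam p q, -tParam p q - 1} := by
  intro x hx
  have key := @eq_of_isPreper_of_eq_add_intCast p q hp hq hp2 hq2 hpq ht
  obtain ⟨x₀, hx₀, k, hxk⟩ := exists_add_intCast_of_isPreper hp hq hp2 hq2 hpq hx
  have hxneg := isPreper_neg_iff.mpr hx
  rcases hx₀ with rfl | rfl | rfl | rfl
  · rcases key hx (.inl hxk) with h | h | h <;> simp [h]
  · rcases key hxneg (k := -k) (.inl (by rw [hxk]; push_cast; ring)) with h | h | h <;>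
      rw [← neg_neg x, h] <;>
      simp only [neg_add', Set.mem_insert_iff, Set.mem_singleton_iff, true_or, or_true]
  · rcases key hx (.inr hxk) with h | h | h <;> simp [h]
  · rcases key hxneg (k := -k) (.inr (by rw [hxk]; push_cast; ring)) with h | h | h <;>
      rw [← neg_neg x, h] <;>
      simp only [neg_add', Set.mem_insert_iff, Set.mem_singleton_iff, true_or, or_true]

theorem preperiodic_structure_of_abs_tParam_lt (hp : p.Prime) (hq : q.Prime) (hp2 : Odd p)
    (hq2 : Odd q) (hpq : p ≠ q) (ht : |tParam p q| < 1 / 4) :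
    {x | IsPreper (twoCycleC (tParam p q)) x} =
        {sParam p q, -sParam p q, tParam p q + 1, -tParam p q, tParam p q, -tParam p q - 1} ∧
      {x | IsPreper (twoCycleC (tParam p q)) x}.ncard = 6 ∧
      ∃ a b : ℚ, a ≠ b ∧ {x | IsPer (twoCycleC (tParam p q)) x} = {a, b} ∧
        fc (twoCycleC (tParam p q)) a = b ∧ fc (twoCycleC (tParam p q)) b = a := by
  have hsq := sParam_sq hp.ne_zero hq.ne_zero
  have hsub := setOf_isPreper_twoCycleC_tParam_subset hp hq hp2 hq2 hpq ht
  have hset := hsub.antisymm fun x hx => isPreper_twoCycleC_of_mem hsq hx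
  refine ⟨hset, hset ▸ ncard_twoCycleC_points hsq ?_ (tParam_ne_zero hp.ne_zero hq.ne_zero hpq) ht,
    tParam p q, -tParam p q - 1, ?_, setOf_isPer_twoCycleC hsq hsub, fc_twoCycleC_self,
    fc_twoCycleC_neg_sub_one⟩
  · linarith [one_le_sParam hp.ne_zero hq.ne_zero]
  · intro h; linarith [abs_lt.mp ht]

end OddPrimes

theorem cast_tParam (p q : ℕ) : (tParam p q : ℝ) = ((p : ℝ) / q - q / p) / 2 := by
  rcases eq_or_ne p 0 with rfl | hp
  · simp [tParam]
  rcases eq_or_ne q 0 with rfl | hq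
  · simp [tParam]
  push_cast [tParam]
  field_simp

theorem eventually_abs_tParam_lt {p q : ℕ → ℕ}
    (hlim : Tendsto (fun n => (p n : ℝ) / (q n : ℝ)) atTop (nhds 1)) :
    ∀ᶠ n in atTop, |tParam (p n) (q n)| < 1 / 4 := by
  have ht : Tendsto (fun n => ((p n : ℝ) / q n - q n / p n) / 2) atTop (nhds 0) := by
    simpa [inv_div] using (hlim.sub (hlim.inv₀ one_ne_zero)).div_const 2
  filter_upwards [ht.abs.eventually_lt_const (by norm_num : |(0 : ℝ)| < 1 / 4)] with n hn
  rwa [← cast_tParam, ← Rat.cast_abs, show (1 / 4 : ℝ) = ((1 / 4 : ℚ) : ℝ) by norm_num,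
    Rat.cast_lt] at hn

/-- For sequences of distinct odd primes `p n ≠ q n` with `p n / q n → 1`, and
`c n = -(p⁴ + 2p³q + 2p²q² - 2pq³ + q⁴)/(2pq)²`, for all large `n` the map `f_{c n}`
has exactly the six rational preperiodic points `±(p² + q²)/(2pq)` and
`±1/2 ± (p² + pq - q²)/(2pq)`, of which exactly 2 are periodic, forming a 2-cycle. -/
theorem graph_6_2_family (p q : ℕ → ℕ)
    (hp : ∀ n, (p n).Prime) (hq : ∀ n, (q n).Prime)
    (hpodd : ∀ n, Odd (p n)) (hqodd : ∀ n, Odd (q n))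
    (hne : ∀ n, p n ≠ q n)
    (hlim : Tendsto (fun n => (p n : ℝ) / (q n : ℝ)) atTop (nhds 1)) :
    ∀ᶠ n in atTop,
      letI P : ℚ := (p n : ℚ)
      letI Q : ℚ := (q n : ℚ)
      letI c : ℚ := -((P ^ 4 + 2 * P ^ 3 * Q + 2 * P ^ 2 * Q ^ 2 - 2 * P * Q ^ 3 + Q ^ 4) /
        (2 * P * Q) ^ 2)
      {x : ℚ | IsPreper c x} =
        {(P ^ 2 + Q ^ 2) / (2 * P * Q), -((P ^ 2 + Q ^ 2) / (2 * P * Q)),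
          1 / 2 + (P ^ 2 + P * Q - Q ^ 2) / (2 * P * Q),
          1 / 2 - (P ^ 2 + P * Q - Q ^ 2) / (2 * P * Q),
          -(1 / 2) + (P ^ 2 + P * Q - Q ^ 2) / (2 * P * Q),
          -(1 / 2) - (P ^ 2 + P * Q - Q ^ 2) / (2 * P * Q)} ∧
      {x : ℚ | IsPreper c x}.ncard = 6 ∧
      (∃ a b : ℚ, a ≠ b ∧ {x : ℚ | IsPer c x} = {a, b} ∧ fc c a = b ∧ fc c b = a) := by
  filter_upwards [eventually_abs_tParam_lt hlim] with n ht
  have hP : (p n : ℚ) ≠ 0 := by exact_mod_cast (hp n).ne_zero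
  have hQ : (q n : ℚ) ≠ 0 := by exact_mod_cast (hq n).ne_zero
  have hc : -(((p n : ℚ) ^ 4 + 2 * (p n : ℚ) ^ 3 * q n + 2 * (p n : ℚ) ^ 2 * (q n : ℚ) ^ 2
      - 2 * p n * (q n : ℚ) ^ 3 + (q n : ℚ) ^ 4) / (2 * p n * q n) ^ 2)
      = twoCycleC (tParam (p n) (q n)) := by
    simp only [twoCycleC, tParam]; field_simp; ring
  have hmid : ((p n : ℚ) ^ 2 + p n * q n - (q n : ℚ) ^ 2) / (2 * p n * q n)
      = tParam (p n) (q n) + 1 / 2 := by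
    simp only [tParam]; field_simp; ring
  have hs : ((p n : ℚ) ^ 2 + (q n : ℚ) ^ 2) / (2 * p n * q n) = sParam (p n) (q n) := rfl
  rw [hc, hmid, hs]
  convert preperiodic_structure_of_abs_tParam_lt (hp n) (hq n) (hpodd n) (hqodd n) (hne n) ht
    using 4
  ring_nf
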